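/- Let T be a pointwise map with respect to an oriented hyperplane H on measurable functions, with associated functions F⁺ and F⁻. Then T is monotonic (f ≤ g a.e. implies Tf ≤ Tg a.e.) if and only if F⁺ and F⁻ are increasing in each variable. -/

import Mathlib

/-!
The map `x ↦ x - 2⟪x, u⟫ u` is the orthogonal reflection in `H = u^⊥`, so it preserves Lebesgue
measure and `f ≤ g` a.e. gives `f x† ≤ g x†` a.e. as well; monotonicity of `F^±` in each variable
then makes `T` monotone. Conversely, testing `T` on the step functions equal to `a` on `H⁺` and
`b` on `H⁻` shows that `Tf` is the constant `F⁺(a, b)` on the open half-space `{⟪x, u⟫ > 0}` and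
the constant `F⁻(b, a)` on `{⟪x, u⟫ < 0}`; both sets have positive measure, so an a.e. inequality
between two such constants is a true inequality.
-/

open MeasureTheory Set RealInnerProductSpace Function

section Pointwise

variable {E : Type*} [NormedAddCommGroup E] [InnerProductSpace ℝ E]

def hyperplaneReflection (u x : E) : E := x - (2 * ⟪x, u⟫) • u

noncomputable def pointwiseOp (u : E) (Fp Fm : ℝ → ℝ → ℝ) (f : E → ℝ) (x : E) : ℝ :=
  if 0 ≤ ⟪x, u⟫ then Fp (f x) (f (hyperplaneReflection u x))
  else Fm (f x) (f (hyperplaneReflection u x))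

noncomputable def halfSpaceStep (u : E) (a b : ℝ) (x : E) : ℝ := if 0 ≤ ⟪x, u⟫ then a else b

variable {u : E}

lemma inner_hyperplaneReflection (hu : ‖u‖ = 1) (x : E) :
    ⟪hyperplaneReflection u x, u⟫ = -⟪x, u⟫ := by
  simp only [hyperplaneReflection, inner_sub_left, real_inner_smul_left,
    real_inner_self_eq_norm_sq, hu]
  ring

lemma coe_reflection_orthogonal_span_singleton (hu : ‖u‖ = 1) :
    ⇑(Submodule.reflection (ℝ ∙ u)ᗮ) = hyperplaneReflection u := by
  ext x
  rw [Submodule.reflection_apply, Submodule.starProjection_orthogonal_val,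
    Submodule.starProjection_singleton, hu, real_inner_comm, hyperplaneReflection, two_smul]
  module

lemma measurePreserving_hyperplaneReflection [FiniteDimensional ℝ E] [MeasurableSpace E]
    [BorelSpace E] (hu : ‖u‖ = 1) : MeasurePreserving (hyperplaneReflection u) := by
  rw [← coe_reflection_orthogonal_span_singleton hu]
  exact LinearIsometryEquiv.measurePreserving _

lemma pointwiseOp_halfSpaceStep_of_pos (hu : ‖u‖ = 1) (Fp Fm : ℝ → ℝ → ℝ) (a b : ℝ) {x : E}
    (hx : 0 < ⟪x, u⟫) : pointwiseOp u Fp Fm (halfSpaceStep u a b) x = Fp a b := by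
  have hRx : ¬ 0 ≤ ⟪hyperplaneReflection u x, u⟫ := by
    rw [inner_hyperplaneReflection hu]; linarith
  simp only [pointwiseOp, halfSpaceStep, if_pos hx.le, if_neg hRx]

lemma pointwiseOp_halfSpaceStep_of_neg (hu : ‖u‖ = 1) (Fp Fm : ℝ → ℝ → ℝ) (a b : ℝ) {x : E}
    (hx : ⟪x, u⟫ < 0) : pointwiseOp u Fp Fm (halfSpaceStep u a b) x = Fm b a := by
  have hRx : 0 ≤ ⟪hyperplaneReflection u x, u⟫ := by
    rw [inner_hyperplaneReflection hu]; linarith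
  simp only [pointwiseOp, halfSpaceStep, if_neg hx.not_ge, if_pos hRx]

lemma measurable_halfSpaceStep [MeasurableSpace E] [OpensMeasurableSpace E] (a b : ℝ) :
    Measurable (halfSpaceStep u a b) :=
  Measurable.ite
    (measurableSet_le measurable_const (continuous_id.inner continuous_const).measurable)
    measurable_const measurable_const

end Pointwise

lemma le_of_ae_le_of_eqOn_isOpen {X : Type*} [TopologicalSpace X] [MeasurableSpace X]
    [OpensMeasurableSpace X] {μ : Measure X} [μ.IsOpenPosMeasure] {f g : X → ℝ} {U : Set X}
    {c c' : ℝ} (hfg : f ≤ᵐ[μ] g) (hU : IsOpen U) (hUne : U.Nonempty) (hf : EqOn f (fun _ => c) U)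
    (hg : EqOn g (fun _ => c') U) : c ≤ c' := by
  have : (ae (μ.restrict U)).NeBot := ae_restrict_neBot.2 (hU.measure_ne_zero μ hUne)
  obtain ⟨x, hxU, hx⟩ := ((ae_restrict_mem hU.measurableSet).and (ae_restrict_of_ae hfg)).exists
  rwa [hf hxU, hg hxU] at hx

lemma monotone_uncurry_iff {α β γ : Type*} [Preorder α] [Preorder β] [Preorder γ]
    {F : α → β → γ} :
    Monotone (uncurry F) ↔ (∀ b, Monotone fun a => F a b) ∧ ∀ a, Monotone fun b => F a b :=
  monotone_prod_iff.trans and_comm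

section Monotonicity

variable {E : Type*} [NormedAddCommGroup E] [InnerProductSpace ℝ E] [MeasurableSpace E]
  {μ : Measure E} {u : E} {Fp Fm : ℝ → ℝ → ℝ}

lemma pointwiseOp_ae_mono (hp : Monotone (uncurry Fp)) (hm : Monotone (uncurry Fm))
    (hR : Measure.QuasiMeasurePreserving (hyperplaneReflection u) μ μ) {f g : E → ℝ}
    (hfg : f ≤ᵐ[μ] g) : pointwiseOp u Fp Fm f ≤ᵐ[μ] pointwiseOp u Fp Fm g := by
  filter_upwards [hfg, hR.tendsto_ae.eventually hfg] with x hx hRx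
  unfold pointwiseOp
  split_ifs
  · exact hp (Prod.mk_le_mk.2 ⟨hx, hRx⟩)
  · exact hm (Prod.mk_le_mk.2 ⟨hx, hRx⟩)

lemma monotone_uncurry_of_pointwiseOp_ae_mono [OpensMeasurableSpace E] [μ.IsOpenPosMeasure]
    (hu : ‖u‖ = 1)
    (hT : ∀ f g, Measurable f → Measurable g →
      f ≤ᵐ[μ] g → pointwiseOp u Fp Fm f ≤ᵐ[μ] pointwiseOp u Fp Fm g) :
    Monotone (uncurry Fp) ∧ Monotone (uncurry Fm) := by
  have hstep : ∀ {a b a' b' : ℝ}, a ≤ a' → b ≤ b' →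
      pointwiseOp u Fp Fm (halfSpaceStep u a b) ≤ᵐ[μ]
        pointwiseOp u Fp Fm (halfSpaceStep u a' b') :=
    fun ha hb => hT _ _ (measurable_halfSpaceStep _ _) (measurable_halfSpaceStep _ _)
      (Filter.Eventually.of_forall fun x => by unfold halfSpaceStep; split_ifs <;> assumption)
  have hinner : Continuous fun x : E => ⟪x, u⟫ := continuous_id.inner continuous_const
  constructor
  · rintro ⟨a, b⟩ ⟨a', b'⟩ ⟨ha, hb⟩
    exact le_of_ae_le_of_eqOn_isOpen (hstep ha hb) (isOpen_lt continuous_const hinner)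
      ⟨u, by simp [hu]⟩ (fun x hx => pointwiseOp_halfSpaceStep_of_pos hu _ _ _ _ hx)
      (fun x hx => pointwiseOp_halfSpaceStep_of_pos hu _ _ _ _ hx)
  · rintro ⟨b, a⟩ ⟨b', a'⟩ ⟨hb, ha⟩
    exact le_of_ae_le_of_eqOn_isOpen (hstep ha hb) (isOpen_lt hinner continuous_const)
      ⟨-u, by simp [hu]⟩ (fun x hx => pointwiseOp_halfSpaceStep_of_neg hu _ _ _ _ hx)
      (fun x hx => pointwiseOp_halfSpaceStep_of_neg hu _ _ _ _ hx)

end Monotonicity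

theorem stmt_9 {n : ℕ} (u : EuclideanSpace ℝ (Fin n)) (hu : ‖u‖ = 1)
    (T : (EuclideanSpace ℝ (Fin n) → ℝ) → (EuclideanSpace ℝ (Fin n) → ℝ))
    (Fp Fm : ℝ → ℝ → ℝ)
    (hpt : ∀ f x, T f x =
      if 0 ≤ ⟪x, u⟫ then Fp (f x) (f (x - (2 * ⟪x, u⟫) • u))
      else Fm (f x) (f (x - (2 * ⟪x, u⟫) • u))) :
    (∀ f g, Measurable f → Measurable g →
        f ≤ᵐ[volume] g → T f ≤ᵐ[volume] T g) ↔
      ((∀ s : ℝ, Monotone fun r => Fp r s) ∧ (∀ r : ℝ, Monotone fun s => Fp r s) ∧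
       (∀ s : ℝ, Monotone fun r => Fm r s) ∧ (∀ r : ℝ, Monotone fun s => Fm r s)) := by
  obtain rfl : T = pointwiseOp u Fp Fm := funext₂ hpt
  rw [← and_assoc, ← monotone_uncurry_iff, ← monotone_uncurry_iff]
  have hR := (measurePreserving_hyperplaneReflection hu).quasiMeasurePreserving
  exact ⟨monotone_uncurry_of_pointwiseOp_ae_mono hu,
    fun ⟨hp, hm⟩ f g _ _ => pointwiseOp_ae_mono hp hm hR⟩
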